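/- Let (X_k)_{k≥1} be i.i.d. real random variables of law P_θ = N(θ,1) for an unknown θ ∈ ℝ. For each θ ∈ ℝ define the following version p_θ of the density dP_θ/dP₀ with respect to the reference measure P₀ = N(0,1): p_θ(x) = exp[θx − θ²/2] if x ≠ θ or θ ≤ 0, and p_θ(x) = exp[θx − θ²/2 + (θ²/2)exp(x²)] if x = θ > 0. Then for every θ ∈ ℝ, the probability under P_θ of the event {for all θ' ∈ ℝ with θ' ≠ X_{(n)}, ∏_{i=1}^n p_{θ'}(X_i) < ∏_{i=1}^n p_{X_{(n)}}(X_i)} tends to 1 as n → ∞, where X_{(n)} = max{X₁,…,Xₙ}; hence the maximum-likelihood estimator for these density versions equals X_{(n)} with probability tending to 1 and is not consistent. -/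

import Mathlib

/-!
The log-likelihood of a sample `x` at `t` is `t Σ xᵢ - n t²/2`, plus the spike
`t²/2 · exp t²` for each `i` with `xᵢ = t > 0`. If the sample is injective, lies in `[-B, B]` and
its maximum `M` satisfies `4 n B² < M² exp M²`, the spike at `M` wins: it exceeds `2 n B²`, the largest
possible gain of the smooth part, and since `s ↦ s exp s²` is increasing, a spike at a sample point
`t < M` falls short of it by at least `(M - t) (M exp M² / 2 - 2 n B)`.

For `N(θ, 1)` samples these conditions hold with probability tending to one for `B = 2 log n` once
`M ≥ √(6/5 · log n)`, which in turn happens with probability tending to one: Chernoff bounds control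
the tails, and the density is at least `φ(t + 1)` on `[t, t + 1]`. As `√(6/5 · log n) → ∞`, the
maximum also ends up more than `1` away from `θ`.
-/

open MeasureTheory ProbabilityTheory Filter

open Classical in
/-- The version `p_θ` of the density `dN(θ,1)/dN(0,1)` from Proposition 2 of the paper:
`p_θ(x) = exp[θx − θ²/2]` if `x ≠ θ` or `θ ≤ 0`, and
`p_θ(x) = exp[θx − θ²/2 + (θ²/2)exp(x²)]` if `x = θ > 0`. -/
noncomputable def badVersion (θ x : ℝ) : ℝ :=
  if x = θ ∧ 0 < θ then Real.exp (θ * x - θ ^ 2 / 2 + (θ ^ 2 / 2) * Real.exp (x ^ 2))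
  else Real.exp (θ * x - θ ^ 2 / 2)

open Real Set Function
open scoped ENNReal NNReal Topology

lemma loglik_lt_loglik_add_spike {n S M B : ℝ} (hn : 0 < n) (hS : |S| ≤ n * B) (hMB : |M| ≤ B)
    (hgrowth : 4 * n * B ^ 2 < M ^ 2 * exp (M ^ 2)) (t : ℝ) :
    t * S - n * (t ^ 2 / 2) < M * S - n * (M ^ 2 / 2) + M ^ 2 / 2 * exp (M ^ 2) := by
  have hgap : (S - n * M) ^ 2 ≤ (2 * n * B) ^ 2 := by
    rw [abs_le] at hS hMB
    apply sq_le_sq' <;> nlinarith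
  nlinarith [sq_nonneg (S - n * t)]

lemma loglik_add_spike_lt_loglik_add_spike {n S M B t : ℝ} (hS : |S| ≤ n * B) (ht : 0 < t)
    (htM : t < M) (hMB : M ≤ B) (hgrowth : 4 * n * B ^ 2 < M ^ 2 * exp (M ^ 2)) :
    t * S - n * (t ^ 2 / 2) + t ^ 2 / 2 * exp (t ^ 2)
      < M * S - n * (M ^ 2 / 2) + M ^ 2 / 2 * exp (M ^ 2) := by
  have hM : 0 < M := ht.trans htM
  -- `s ↦ s exp s²` is increasing, so the spike at `t` is at most `t / M` times the one at `M`
  have hspike : t * exp (t ^ 2) ≤ M * exp (M ^ 2) :=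
    mul_le_mul htM.le (exp_le_exp.2 (pow_le_pow_left₀ ht.le htM.le 2)) (exp_pos _).le hM.le
  have hn : 0 ≤ n := by nlinarith [abs_nonneg S]
  have hsmooth : t * S - n * (t ^ 2 / 2) - (M * S - n * (M ^ 2 / 2)) ≤ 2 * n * B * (M - t) := by
    rw [abs_le] at hS
    nlinarith [mul_nonneg (sub_nonneg.2 htM.le) (mul_nonneg hn (by linarith : 0 ≤ 2 * B - M - t))]
  have hslope : 4 * n * B < M * exp (M ^ 2) := by
    nlinarith [mul_le_mul_of_nonneg_left hMB (by nlinarith : 0 ≤ 4 * n * B)]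
  nlinarith [mul_lt_mul_of_pos_left hslope (sub_pos.2 htM)]

lemma badVersion_eq_exp (t y : ℝ) :
    badVersion t y =
      exp (t * y - t ^ 2 / 2 + if y = t ∧ 0 < t then t ^ 2 / 2 * exp (t ^ 2) else 0) := by
  unfold badVersion
  split_ifs with h
  · rw [h.1]
  · rw [add_zero]

lemma prod_badVersion_of_injective {ι : Type*} [Fintype ι] {x : ι → ℝ} (hx : Injective x)
    (t : ℝ) :
    ∏ i, badVersion t (x i) = exp (t * ∑ i, x i - Fintype.card ι * (t ^ 2 / 2)
      + if t ∈ range x ∧ 0 < t then t ^ 2 / 2 * exp (t ^ 2) else 0) := by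
  simp_rw [badVersion_eq_exp, ← exp_sum, Finset.sum_add_distrib, Finset.sum_sub_distrib,
    Finset.mul_sum, Finset.sum_const, Finset.card_univ, nsmul_eq_mul]
  congr 2
  by_cases h : t ∈ range x
  · obtain ⟨j, rfl⟩ := h
    rw [Finset.sum_eq_single j (fun i _ hij => if_neg fun h => hij (hx h.1)) (by simp)]
    simp
  · simp only [h, false_and, if_false]
    exact Finset.sum_eq_zero fun i _ => if_neg fun hi => h ⟨i, hi.1⟩

lemma prod_badVersion_lt_prod_badVersion_ciSup {ι : Type*} [Fintype ι] [Nonempty ι]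
    {x : ι → ℝ} {B : ℝ} (hx : Injective x) (hB : ∀ i, |x i| ≤ B) (hM : 0 < ⨆ i, x i)
    (hgrowth : 4 * Fintype.card ι * B ^ 2 < (⨆ i, x i) ^ 2 * exp ((⨆ i, x i) ^ 2))
    {t : ℝ} (ht : t ≠ ⨆ i, x i) :
    ∏ i, badVersion t (x i) < ∏ i, badVersion (⨆ i, x i) (x i) := by
  obtain ⟨j, hj⟩ := exists_eq_ciSup_of_finite (f := x)
  set M := ⨆ i, x i
  have hle : ∀ i, x i ≤ M := le_ciSup (Finite.bddAbove_range x)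
  have hMB : |M| ≤ B := hj ▸ hB j
  have hS : |∑ i, x i| ≤ Fintype.card ι * B := by
    calc |∑ i, x i| ≤ ∑ i, |x i| := Finset.abs_sum_le_sum_abs _ _
      _ ≤ ∑ _i : ι, B := Finset.sum_le_sum fun i _ => hB i
      _ = Fintype.card ι * B := by simp
  rw [prod_badVersion_of_injective hx, prod_badVersion_of_injective hx, exp_lt_exp,
    if_pos (show M ∈ range x ∧ 0 < M from ⟨⟨j, hj⟩, hM⟩)]
  split_ifs with hspike
  · obtain ⟨⟨i, rfl⟩, hpos⟩ := hspike
    exact loglik_add_spike_lt_loglik_add_spike hS hpos (lt_of_le_of_ne (hle i) ht)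
      (le_of_abs_le hMB) hgrowth
  · rw [add_zero]
    exact loglik_lt_loglik_add_spike (by exact_mod_cast Fintype.card_pos) hS hMB hgrowth t

lemma tendsto_measure_one_of_compl_subset {α : ℕ → Type*} [∀ n, MeasurableSpace (α n)]
    {μ : ∀ n, Measure (α n)} [∀ n, IsProbabilityMeasure (μ n)] {s bad : ∀ n, Set (α n)}
    (hbad : Tendsto (fun n => μ n (bad n)) atTop (𝓝 0)) (hs : ∀ᶠ n in atTop, (s n)ᶜ ⊆ bad n) :
    Tendsto (fun n => μ n (s n)) atTop (𝓝 1) := by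
  have hlow : Tendsto (fun n => 1 - μ n (bad n)) atTop (𝓝 1) := by
    simpa using ENNReal.Tendsto.sub tendsto_const_nhds hbad (Or.inl ENNReal.one_ne_top)
  refine tendsto_of_tendsto_of_tendsto_of_le_of_le' hlow tendsto_const_nhds ?_
    (Eventually.of_forall fun n => prob_le_one)
  filter_upwards [hs] with n hn
  rw [tsub_le_iff_right, ← measure_univ (μ := μ n), ← union_compl_self (s n)]
  exact (measure_union_le _ _).trans (add_le_add_right (measure_mono hn) _)

lemma tendsto_measure_union_zero {α : ℕ → Type*} [∀ n, MeasurableSpace (α n)]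
    {μ : ∀ n, Measure (α n)} {s t : ∀ n, Set (α n)}
    (hs : Tendsto (fun n => μ n (s n)) atTop (𝓝 0))
    (ht : Tendsto (fun n => μ n (t n)) atTop (𝓝 0)) :
    Tendsto (fun n => μ n (s n ∪ t n)) atTop (𝓝 0) :=
  tendsto_of_tendsto_of_tendsto_of_le_of_le tendsto_const_nhds (by simpa using hs.add ht)
    (fun _ => zero_le) fun _ => measure_union_le _ _

section Pi

variable {ι α : Type*} [Fintype ι] [MeasurableSpace α] (ν : Measure α) [IsProbabilityMeasure ν]

lemma measure_pi_apply_eq_apply [MeasurableEq α] [NullSingletonClass ν] {i j : ι} (hij : i ≠ j) :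
    Measure.pi (fun _ => ν) {x | x i = x j} = 0 := by
  have hindep : IndepFun (fun x : ι → α => x i) (fun x => x j) (Measure.pi fun _ => ν) :=
    (iIndepFun_pi (X := fun _ => id) fun _ => aemeasurable_id).indepFun hij
  rw [indepFun_iff_map_prod_eq_prod_map_map (measurable_pi_apply i).aemeasurable
    (measurable_pi_apply j).aemeasurable, (measurePreserving_eval _ i).map_eq,
    (measurePreserving_eval _ j).map_eq] at hindep
  have hdiag : {x : ι → α | x i = x j} = (fun x => (x i, x j)) ⁻¹' diagonal α := rfl
  rw [hdiag, ← Measure.map_apply ((measurable_pi_apply i).prodMk (measurable_pi_apply j))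
    measurableSet_diagonal, hindep, Measure.prod_apply measurableSet_diagonal]
  simp [preimage, diagonal]

lemma measure_pi_not_injective [MeasurableEq α] [NullSingletonClass ν] :
    Measure.pi (fun _ : ι => ν) {x | ¬ Injective x} = 0 := by
  have hsub : {x : ι → α | ¬ Injective x} ⊆
      ⋃ p : {p : ι × ι // p.1 ≠ p.2}, {x | x p.1.1 = x p.1.2} := by
    intro x hx
    simp only [Injective, not_forall] at hx
    obtain ⟨i, j, hxij, hij⟩ := hx
    exact mem_iUnion.2 ⟨⟨(i, j), hij⟩, hxij⟩
  exact measure_mono_null hsub (measure_iUnion_null fun p => measure_pi_apply_eq_apply ν p.2)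

lemma measure_pi_exists_mem_le {s : Set α} (hs : MeasurableSet s) :
    Measure.pi (fun _ : ι => ν) {x | ∃ i, x i ∈ s} ≤ Fintype.card ι * ν s := by
  have hunion : {x : ι → α | ∃ i, x i ∈ s} = ⋃ i, eval i ⁻¹' s := by ext; simp
  calc Measure.pi (fun _ : ι => ν) {x | ∃ i, x i ∈ s}
      ≤ ∑ i, Measure.pi (fun _ : ι => ν) (eval i ⁻¹' s) := hunion ▸ measure_iUnion_fintype_le _ _
    _ = Fintype.card ι * ν s := by
      simp [(measurePreserving_eval (fun _ : ι => ν) _).measure_preimage hs.nullMeasurableSet]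

end Pi

lemma measure_pi_ciSup_lt_le {ι : Type*} [Fintype ι] (ν : Measure ℝ) [IsProbabilityMeasure ν]
    (t : ℝ) : Measure.pi (fun _ : ι => ν) {x | ⨆ i, x i < t} ≤ ν (Iio t) ^ Fintype.card ι := by
  calc Measure.pi (fun _ : ι => ν) {x | ⨆ i, x i < t}
      ≤ Measure.pi (fun _ : ι => ν) (univ.pi fun _ => Iio t) :=
        measure_mono fun x hx i _ => (le_ciSup (Finite.bddAbove_range x) i).trans_lt hx
    _ = ν (Iio t) ^ Fintype.card ι := by simp [Measure.pi_pi]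

lemma gaussianReal_abs_gt_le (m : ℝ) (v : ℝ≥0) (b : ℝ) :
    gaussianReal m v {y | b < |y|} ≤ ENNReal.ofReal (2 * exp (|m| + v / 2 - b)) := by
  have hupper : (gaussianReal m v).real {y | b ≤ y} ≤ exp (m + v / 2 - b) := by
    have := measure_ge_le_exp_mul_mgf (X := id) b zero_le_one
      (by simpa using integrable_exp_mul_gaussianReal (μ := m) (v := v) 1)
    rw [mgf_id_gaussianReal, ← exp_add] at this
    simpa [sub_eq_neg_add, add_comm, add_left_comm] using this
  have hlower : (gaussianReal m v).real {y | y ≤ -b} ≤ exp (-m + v / 2 - b) := by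
    have := measure_le_le_exp_mul_mgf (X := id) (-b) (t := -1) (by norm_num)
      (by simpa using integrable_exp_mul_gaussianReal (μ := m) (v := v) (-1))
    rw [mgf_id_gaussianReal, ← exp_add] at this
    simpa [sub_eq_neg_add, add_comm, add_left_comm] using this
  have hsplit : {y : ℝ | b < |y|} ⊆ {y | b ≤ y} ∪ {y | y ≤ -b} := by
    intro y (hy : b < |y|)
    rcases lt_abs.1 hy with h | h
    · exact Or.inl h.le
    · exact Or.inr (show y ≤ -b by linarith)
  rw [← ofReal_measureReal]
  refine ENNReal.ofReal_le_ofReal ?_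
  calc (gaussianReal m v).real {y | b < |y|}
      ≤ (gaussianReal m v).real {y | b ≤ y} + (gaussianReal m v).real {y | y ≤ -b} :=
        (measureReal_mono hsplit).trans (measureReal_union_le _ _)
    _ ≤ exp (m + v / 2 - b) + exp (-m + v / 2 - b) := add_le_add hupper hlower
    _ ≤ 2 * exp (|m| + v / 2 - b) := by
      have h1 := exp_le_exp.2 (show m + v / 2 - b ≤ |m| + v / 2 - b by linarith [le_abs_self m])
      have h2 := exp_le_exp.2 (show -m + v / 2 - b ≤ |m| + v / 2 - b by linarith [neg_le_abs m])
      linarith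

lemma gaussianPDFReal_le_of_abs_le {m x y : ℝ} (v : ℝ≥0) (h : |x - m| ≤ |y - m|) :
    gaussianPDFReal m v y ≤ gaussianPDFReal m v x := by
  unfold gaussianPDFReal
  gcongr _ * exp (-?_ / _)
  exact sq_le_sq.2 h

lemma gaussianReal_Iio_le (m : ℝ) {v : ℝ≥0} (hv : v ≠ 0) {t : ℝ} (ht : m - 1 / 2 ≤ t) :
    gaussianReal m v (Iio t) ≤ ENNReal.ofReal (exp (-gaussianPDFReal m v (t + 1))) := by
  set d := gaussianPDFReal m v (t + 1)
  have hIcc : ENNReal.ofReal d ≤ gaussianReal m v (Icc t (t + 1)) := by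
    rw [gaussianReal_apply m hv]
    calc ENNReal.ofReal d = ∫⁻ _ in Icc t (t + 1), ENNReal.ofReal d := by simp
      _ ≤ ∫⁻ x in Icc t (t + 1), gaussianPDF m v x :=
        setLIntegral_mono (measurable_gaussianPDF m v) fun x hx =>
          ENNReal.ofReal_le_ofReal <| gaussianPDFReal_le_of_abs_le v <| by
            rw [abs_le, abs_of_nonneg (by linarith)]
            constructor <;> linarith [hx.1, hx.2]
  have hsum : gaussianReal m v (Iio t) + ENNReal.ofReal d ≤ 1 := by
    calc gaussianReal m v (Iio t) + ENNReal.ofReal d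
        ≤ gaussianReal m v (Iio t) + gaussianReal m v (Icc t (t + 1)) := by gcongr
      _ = gaussianReal m v (Iio t ∪ Icc t (t + 1)) :=
        (measure_union (Iio_disjoint_Ici le_rfl |>.mono_right Icc_subset_Ici_self)
          measurableSet_Icc).symm
      _ ≤ 1 := prob_le_one
  calc gaussianReal m v (Iio t) ≤ 1 - ENNReal.ofReal d :=
        ENNReal.le_sub_of_add_le_right ENNReal.ofReal_ne_top hsum
    _ = ENNReal.ofReal (1 - d) := by
        rw [← ENNReal.ofReal_one, ENNReal.ofReal_sub _ (gaussianPDFReal_nonneg m v _)]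
    _ ≤ ENNReal.ofReal (exp (-d)) := ENNReal.ofReal_le_ofReal (by linarith [add_one_le_exp (-d)])

/-- Since `1 < 6/5 < 2`, the maximum of `n` samples of `N(m, 1)` exceeds `√(6/5 · log n)` with
probability tending to one, while `exp (6/5 · log n) = n^{6/5}` still beats `n (log n)²`. -/
noncomputable def maxThreshold (n : ℕ) : ℝ := √(6 / 5 * log n)

lemma tendsto_maxThreshold : Tendsto maxThreshold atTop atTop :=
  tendsto_sqrt_atTop.comp <|
    (tendsto_log_atTop.comp tendsto_natCast_atTop_atTop).const_mul_atTop (by norm_num)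

lemma maxThreshold_sq {n : ℕ} (hn : 1 ≤ n) : maxThreshold n ^ 2 = 6 / 5 * log n :=
  sq_sqrt (by have := log_nonneg (Nat.one_le_cast.2 hn); positivity)

lemma tendsto_natCast_mul_gaussianPDFReal_maxThreshold (m : ℝ) :
    Tendsto (fun n : ℕ => n * gaussianPDFReal m 1 (maxThreshold n + 1)) atTop atTop := by
  have hκ : 0 < (√(2 * π))⁻¹ * exp (-2 * (1 - m) ^ 2) := by positivity
  refine tendsto_atTop_mono' _ ?_ <| (tendsto_exp_atTop.comp <|
    (tendsto_log_atTop.comp tendsto_natCast_atTop_atTop).atTop_div_const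
      (by norm_num : (0 : ℝ) < 5)).const_mul_atTop hκ
  filter_upwards [eventually_ge_atTop 1] with n hn
  set t := maxThreshold n
  -- `2 t (1 - m) ≤ t² / 3 + 3 (1 - m)²` lets the quadratic `t²` absorb the shift by `1 - m`
  have hexp : -(2 / 3) * t ^ 2 - 2 * (1 - m) ^ 2 ≤ -(t + 1 - m) ^ 2 / 2 := by
    nlinarith [sq_nonneg (t - 3 * (1 - m))]
  calc (√(2 * π))⁻¹ * exp (-2 * (1 - m) ^ 2) * exp (log n / 5)
      = (√(2 * π))⁻¹ * exp (log n + (-(2 / 3) * t ^ 2 - 2 * (1 - m) ^ 2)) := by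
        rw [maxThreshold_sq hn, mul_assoc, ← exp_add]
        ring_nf
    _ ≤ (√(2 * π))⁻¹ * exp (log n + -(t + 1 - m) ^ 2 / 2) := by gcongr
    _ = n * gaussianPDFReal m 1 (t + 1) := by
        rw [exp_add, exp_log (Nat.cast_pos.2 hn)]
        simp only [gaussianPDFReal, NNReal.coe_one, mul_one]
        ring

lemma tendsto_measure_pi_ciSup_lt_maxThreshold (m : ℝ) :
    Tendsto (fun n => Measure.pi (fun _ : Fin n => gaussianReal m 1)
      {x | ⨆ i, x i < maxThreshold n}) atTop (𝓝 0) := by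
  have hlim : Tendsto (fun n : ℕ => ENNReal.ofReal (exp (-(n * gaussianPDFReal m 1
      (maxThreshold n + 1))))) atTop (𝓝 0) := by
    simpa using ENNReal.tendsto_ofReal <| tendsto_exp_atBot.comp <| tendsto_neg_atTop_atBot.comp <|
      tendsto_natCast_mul_gaussianPDFReal_maxThreshold m
  refine tendsto_of_tendsto_of_tendsto_of_le_of_le' tendsto_const_nhds hlim
    (Eventually.of_forall fun _ => zero_le) ?_
  filter_upwards [tendsto_maxThreshold.eventually_ge_atTop (m - 1 / 2)] with n hn
  calc Measure.pi (fun _ : Fin n => gaussianReal m 1) {x | ⨆ i, x i < maxThreshold n}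
      ≤ gaussianReal m 1 (Iio (maxThreshold n)) ^ n := by
        simpa using measure_pi_ciSup_lt_le (ι := Fin n) (gaussianReal m 1) (maxThreshold n)
    _ ≤ ENNReal.ofReal (exp (-gaussianPDFReal m 1 (maxThreshold n + 1))) ^ n := by
        gcongr
        exact gaussianReal_Iio_le m one_ne_zero hn
    _ = ENNReal.ofReal (exp (-(n * gaussianPDFReal m 1 (maxThreshold n + 1)))) := by
        rw [← ENNReal.ofReal_pow (exp_nonneg _), ← exp_nat_mul, mul_neg]

lemma tendsto_measure_pi_exists_two_mul_log_lt_abs (m : ℝ) :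
    Tendsto (fun n => Measure.pi (fun _ : Fin n => gaussianReal m 1)
      {x | ∃ i, 2 * log n < |x i|}) atTop (𝓝 0) := by
  have hlim : Tendsto (fun n : ℕ => ENNReal.ofReal (2 * exp (|m| + 1 / 2) / n)) atTop (𝓝 0) := by
    simpa using ENNReal.tendsto_ofReal
      (tendsto_const_div_atTop_nhds_zero_nat (2 * exp (|m| + 1 / 2)))
  refine tendsto_of_tendsto_of_tendsto_of_le_of_le' tendsto_const_nhds hlim
    (Eventually.of_forall fun _ => zero_le) ?_
  filter_upwards [eventually_ge_atTop 1] with n hn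
  have hn0 : (0 : ℝ) < n := Nat.cast_pos.2 hn
  calc Measure.pi (fun _ : Fin n => gaussianReal m 1) {x | ∃ i, 2 * log n < |x i|}
      ≤ n * gaussianReal m 1 {y | 2 * log n < |y|} := by
        simpa using measure_pi_exists_mem_le (ι := Fin n) (gaussianReal m 1)
          (measurableSet_lt measurable_const measurable_abs)
    _ ≤ n * ENNReal.ofReal (2 * exp (|m| + 1 / 2 - 2 * log n)) := by
        gcongr
        simpa using gaussianReal_abs_gt_le m 1 (2 * log n)
    _ = ENNReal.ofReal (2 * exp (|m| + 1 / 2) / n) := by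
        rw [← ENNReal.ofReal_natCast, ← ENNReal.ofReal_mul hn0.le, exp_sub,
          show 2 * log (n : ℝ) = log (n ^ 2) by rw [log_pow]; norm_num, exp_log (by positivity)]
        congr 1
        field_simp

lemma eventually_four_mul_log_sq_lt_sq_mul_exp_sq :
    ∀ᶠ n : ℕ in atTop, ∀ M, maxThreshold n ≤ M → 4 * n * (2 * log n) ^ 2 < M ^ 2 * exp (M ^ 2) := by
  have hexp : ∀ᶠ u : ℝ in atTop, 14 * u < exp (u / 5) := by
    filter_upwards [((tendsto_exp_div_pow_atTop 1).comp (tendsto_id.atTop_div_const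
      (by norm_num : (0 : ℝ) < 5))).eventually_ge_atTop 71, eventually_gt_atTop 0] with u hu hu0
    simp only [comp_apply, id, pow_one] at hu
    rw [le_div_iff₀ (by positivity)] at hu
    linarith
  filter_upwards [(tendsto_log_atTop.comp tendsto_natCast_atTop_atTop).eventually hexp,
    (tendsto_log_atTop.comp tendsto_natCast_atTop_atTop).eventually_gt_atTop 0,
    eventually_ge_atTop 1] with n hgrowth hlog hn M hM
  simp only [comp_apply] at hgrowth hlog
  have ht : 0 ≤ maxThreshold n := sqrt_nonneg _
  calc 4 * n * (2 * log n) ^ 2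
      < maxThreshold n ^ 2 * exp (maxThreshold n ^ 2) := by
        rw [maxThreshold_sq hn, show 6 / 5 * log (n : ℝ) = log n + log n / 5 by ring, exp_add,
          exp_log (Nat.cast_pos.2 hn)]
        have hn0 : (0 : ℝ) < n := Nat.cast_pos.2 hn
        nlinarith [mul_lt_mul_of_pos_left hgrowth (mul_pos hn0 hlog)]
    _ ≤ M ^ 2 * exp (M ^ 2) := by
        have hM2 := pow_le_pow_left₀ ht hM 2
        gcongr

theorem bad_density_versions_make_mle_inconsistent (θ : ℝ) :
    Tendsto (fun n : ℕ =>
      (Measure.pi fun _ : Fin n => gaussianReal θ 1)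
        {x : Fin n → ℝ | ∀ θ' : ℝ, θ' ≠ (⨆ i, x i) →
          ∏ i, badVersion θ' (x i) < ∏ i, badVersion (⨆ i, x i) (x i)})
      atTop (nhds 1) ∧
    Tendsto (fun n : ℕ =>
      (Measure.pi fun _ : Fin n => gaussianReal θ 1)
        {x : Fin n → ℝ | 1 < |(⨆ i, x i) - θ|})
      atTop (nhds 1) := by
  have : NullSingletonClass (gaussianReal θ 1) := nullSingletonClass_gaussianReal one_ne_zero
  have hmax := tendsto_measure_pi_ciSup_lt_maxThreshold θ
  have hinj : Tendsto (fun n => Measure.pi (fun _ : Fin n => gaussianReal θ 1)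
      {x | ¬ Injective x}) atTop (𝓝 0) := by
    simpa only [measure_pi_not_injective] using tendsto_const_nhds
  constructor
  · refine tendsto_measure_one_of_compl_subset (tendsto_measure_union_zero
      (tendsto_measure_union_zero hinj (tendsto_measure_pi_exists_two_mul_log_lt_abs θ)) hmax) ?_
    filter_upwards [eventually_ge_atTop 1, tendsto_maxThreshold.eventually_gt_atTop 0,
      eventually_four_mul_log_sq_lt_sq_mul_exp_sq] with n hn hpos hgrowth x hx
    by_contra hgood
    simp only [mem_union, mem_ofPred_eq, not_or, not_not, not_exists, not_lt] at hgood
    obtain ⟨⟨hx_inj, hx_bound⟩, hx_max⟩ := hgood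
    have : Nonempty (Fin n) := Fin.pos_iff_nonempty.1 hn
    exact hx fun θ' hθ' => prod_badVersion_lt_prod_badVersion_ciSup hx_inj hx_bound
      (hpos.trans_le hx_max) (by simpa using hgrowth _ hx_max) hθ'
  · refine tendsto_measure_one_of_compl_subset hmax ?_
    filter_upwards [tendsto_maxThreshold.eventually_gt_atTop (θ + 1)] with n hn x hx
    by_contra (hx_max : ¬ ⨆ i, x i < maxThreshold n)
    exact hx (show 1 < |(⨆ i, x i) - θ| from lt_abs.2 (Or.inl (by linarith [not_lt.1 hx_max])))
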